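/- arXiv:1507.06765 — 7 statements merged into one kernel-verified Lean document; each statement's English description precedes it below -/
import Mathlib

section
/- Let G be a prime P5-free graph with an efficient dominating set D = {d_1, ..., d_k} with k ≥ 2, and let R_i = N(d_i) \ D. Then for every i, the set R_i is a clique in G. -/
open SimpleGraph

/-- `D` is an efficient dominating set: every vertex is dominated by exactly one vertex of `D`
(a vertex dominates itself and its neighbors). -/
def SimpleGraph.IsEDS {V : Type*} (G : SimpleGraph V) (D : Set V) : Prop :=
  ∀ v : V, ∃! d, d ∈ D ∧ (d = v ∨ G.Adj d v)

/-- The closed neighborhood of a vertex. -/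
def SimpleGraph.closedNbhd {V : Type*} (G : SimpleGraph V) (v : V) : Set V :=
  insert v (G.neighborSet v)

/-- A homogeneous set: at least two vertices, not all of them, and every outside vertex is
adjacent to all or to none of them. -/
def SimpleGraph.IsHomogeneousSet {V : Type*} (G : SimpleGraph V) (H : Set V) : Prop :=
  2 ≤ H.ncard ∧ H ≠ Set.univ ∧
    ∀ v ∉ H, (∀ h ∈ H, G.Adj v h) ∨ (∀ h ∈ H, ¬ G.Adj v h)

/-- A prime graph: at least two vertices and no homogeneous set. -/
def SimpleGraph.IsPrime {V : Type*} [Fintype V] (G : SimpleGraph V) : Prop :=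
  2 ≤ Fintype.card V ∧ ∀ H : Set V, ¬ G.IsHomogeneousSet H

/-- `G` is `P₅`-free: no induced subgraph isomorphic to the path on five vertices. -/
def SimpleGraph.P5Free {V : Type*} (G : SimpleGraph V) : Prop :=
  ¬ Nonempty (SimpleGraph.pathGraph 5 ↪g G)

/-- The graph `2P₂`: the disjoint union of two edges. -/
def twoP2 : SimpleGraph (Fin 4) :=
  SimpleGraph.fromRel (fun a b => (a = 0 ∧ b = 1) ∨ (a = 2 ∧ b = 3))

/-- `G` is `2P₂`-free: no induced subgraph isomorphic to `2P₂`. -/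
def SimpleGraph.TwoP2Free {V : Type*} (G : SimpleGraph V) : Prop :=
  ¬ Nonempty (twoP2 ↪g G)

/-- A thin spider: a split graph with a clique side `C` and independent side `I`,
with a perfect matching between `C` and `I`. -/
def SimpleGraph.IsThinSpider {V : Type*} (G : SimpleGraph V) : Prop :=
  ∃ C I : Set V, Disjoint C I ∧ C ∪ I = Set.univ ∧ G.IsClique C ∧
    (∀ a ∈ I, ∀ b ∈ I, a ≠ b → ¬ G.Adj a b) ∧
    (∀ c ∈ C, ∃! i, i ∈ I ∧ G.Adj c i) ∧
    (∀ i ∈ I, ∃! c, c ∈ C ∧ G.Adj i c)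

/-!
Suppose `x, y ∈ R = N(d) \ D` are non-adjacent, and let `H` be the co-component of `x` in `R`
(the vertices reachable from `x` along non-edges inside `R`). Then `H` is a homogeneous set:
`d` sees all of `H`, the other vertices of `D` see none of it, a vertex of `R \ H` sees all of it
by maximality of `H`, and a vertex `v ∉ D ∪ R`, dominated by some `u ∈ D`, cannot distinguish
two non-adjacent `a, b ∈ R`, since otherwise `b - d - a - v - u` would be an induced `P₅`.
-/

namespace SimpleGraph

variable {V : Type*} {G : SimpleGraph V}

def complOn (G : SimpleGraph V) (S : Set V) : SimpleGraph V where
  Adj a b := a ≠ b ∧ ¬ G.Adj a b ∧ a ∈ S ∧ b ∈ S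
  symm := ⟨fun _ _ ⟨hne, hnadj, ha, hb⟩ => ⟨hne.symm, fun h => hnadj h.symm, hb, ha⟩⟩
  loopless := ⟨fun _ h => h.1 rfl⟩

@[simp]
theorem complOn_adj {S : Set V} {a b : V} :
    (G.complOn S).Adj a b ↔ a ≠ b ∧ ¬ G.Adj a b ∧ a ∈ S ∧ b ∈ S :=
  Iff.rfl

def coComponent (G : SimpleGraph V) (S : Set V) (x : V) : Set V :=
  {z | (G.complOn S).Reachable x z}

theorem mem_of_mem_coComponent {S : Set V} {x z : V} (hx : x ∈ S)
    (hz : z ∈ G.coComponent S x) : z ∈ S := by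
  rw [coComponent, Set.mem_ofPred_eq, reachable_iff_reflTransGen] at hz
  induction hz with
  | refl => exact hx
  | tail _ hab _ => exact (complOn_adj.mp hab).2.2.2

theorem Reachable.iff_of_forall_adj {K : SimpleGraph V} {P : V → Prop}
    (hP : ∀ a b, K.Adj a b → P a → P b) {x z : V} (h : K.Reachable x z) : P x ↔ P z := by
  rw [reachable_iff_reflTransGen] at h
  induction h with
  | refl => rfl
  | tail _ hab ih => exact ih.trans ⟨hP _ _ hab, hP _ _ hab.symm⟩

theorem isHomogeneousSet_coComponent [Finite V] {S : Set V} {x y : V} (hx : x ∈ S) (hy : y ∈ S)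
    (hne : x ≠ y) (hxy : ¬ G.Adj x y) (hS : ∃ w, w ∉ S)
    (hout : ∀ v ∉ S, ∀ a b, (G.complOn S).Adj a b → G.Adj v a → G.Adj v b) :
    G.IsHomogeneousSet (G.coComponent S x) := by
  have hxH : x ∈ G.coComponent S x := Reachable.refl x
  have hyH : y ∈ G.coComponent S x := Adj.reachable (complOn_adj.mpr ⟨hne, hxy, hx, hy⟩)
  refine ⟨?_, ?_, fun v hv => ?_⟩
  · exact (Set.one_lt_ncard (Set.toFinite _)).mpr ⟨x, hxH, y, hyH, hne⟩
  · obtain ⟨w, hw⟩ := hS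
    exact fun huniv => hw (mem_of_mem_coComponent hx (huniv ▸ Set.mem_univ w))
  by_cases hvS : v ∈ S
  · refine .inl fun h hh => by_contra fun hvh => hv ?_
    have hhv : h ≠ v := by rintro rfl; exact hv hh
    exact Reachable.trans hh (Adj.reachable
      (complOn_adj.mpr ⟨hhv, fun h' => hvh h'.symm, mem_of_mem_coComponent hx hh, hvS⟩))
  · have hconst : ∀ {h}, h ∈ G.coComponent S x → (G.Adj v x ↔ G.Adj v h) :=
      Reachable.iff_of_forall_adj (hout v hvS)
    by_cases hvx : G.Adj v x
    · exact .inl fun h hh => (hconst hh).mp hvx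
    · exact .inr fun h hh hvh => hvx ((hconst hh).mpr hvh)

theorem P5Free.false_of_induced_path (hP5 : G.P5Free) {v₀ v₁ v₂ v₃ v₄ : V}
    (h02 : v₀ ≠ v₂) (h03 : v₀ ≠ v₃) (h04 : v₀ ≠ v₄) (h13 : v₁ ≠ v₃)
    (h14 : v₁ ≠ v₄) (h24 : v₂ ≠ v₄)
    (e01 : G.Adj v₀ v₁) (e12 : G.Adj v₁ v₂) (e23 : G.Adj v₂ v₃) (e34 : G.Adj v₃ v₄)
    (n02 : ¬ G.Adj v₀ v₂) (n03 : ¬ G.Adj v₀ v₃) (n04 : ¬ G.Adj v₀ v₄)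
    (n13 : ¬ G.Adj v₁ v₃) (n14 : ¬ G.Adj v₁ v₄) (n24 : ¬ G.Adj v₂ v₄) : False := by
  have := e01.ne; have := e12.ne; have := e23.ne; have := e34.ne
  have := e01.symm; have := e12.symm; have := e23.symm; have := e34.symm
  have : ¬ G.Adj v₂ v₀ := fun h => n02 h.symm
  have : ¬ G.Adj v₃ v₀ := fun h => n03 h.symm
  have : ¬ G.Adj v₄ v₀ := fun h => n04 h.symm
  have : ¬ G.Adj v₃ v₁ := fun h => n13 h.symm
  have : ¬ G.Adj v₄ v₁ := fun h => n14 h.symm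
  have : ¬ G.Adj v₄ v₂ := fun h => n24 h.symm
  refine hP5 ⟨⟨⟨![v₀, v₁, v₂, v₃, v₄], fun i j hij => ?_⟩, fun {i j} => ?_⟩⟩
  · fin_cases i <;> fin_cases j <;> simp_all
  · show G.Adj (![v₀, v₁, v₂, v₃, v₄] i) (![v₀, v₁, v₂, v₃, v₄] j) ↔ _
    fin_cases i <;> fin_cases j <;> simp_all [pathGraph_adj]

namespace IsEDS

variable {D : Set V}

theorem eq_of_dominates (hD : G.IsEDS D) {z e e' : V} (he : e ∈ D) (he' : e' ∈ D)
    (hez : e = z ∨ G.Adj e z) (he'z : e' = z ∨ G.Adj e' z) : e = e' :=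
  (hD z).unique ⟨he, hez⟩ ⟨he', he'z⟩

theorem eq_of_adj_of_adj (hD : G.IsEDS D) {z e e' : V} (he : e ∈ D) (he' : e' ∈ D)
    (hez : G.Adj e z) (he'z : G.Adj e' z) : e = e' :=
  hD.eq_of_dominates he he' (.inr hez) (.inr he'z)

theorem not_adj_of_mem (hD : G.IsEDS D) {e e' : V} (he : e ∈ D) (he' : e' ∈ D) :
    ¬ G.Adj e e' :=
  fun h => h.ne (hD.eq_of_dominates he he' (.inr h) (.inl rfl))

theorem adj_of_complOn_adj (hD : G.IsEDS D) (hP5 : G.P5Free) {d v a b : V} (hd : d ∈ D)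
    (hv : v ∉ G.neighborSet d \ D) (hab : (G.complOn (G.neighborSet d \ D)).Adj a b)
    (hva : G.Adj v a) : G.Adj v b := by
  obtain ⟨hne, hnab, ⟨hda, haD⟩, ⟨hdb, hbD⟩⟩ := complOn_adj.mp hab
  by_cases hvD : v ∈ D
  · have hvd : v = d := hD.eq_of_adj_of_adj hvD hd hva hda
    exact hvd ▸ hdb
  obtain ⟨u, ⟨huD, hu | huv⟩, -⟩ := hD v
  · exact absurd (hu ▸ huD) hvD
  have hud : u ≠ d := by rintro rfl; exact hv ⟨huv, hvD⟩
  have hnu : ∀ {z}, G.Adj d z → ¬ G.Adj z u := fun hdz hzu =>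
    hud (hD.eq_of_adj_of_adj huD hd hzu.symm hdz)
  by_contra hvb
  exact hP5.false_of_induced_path (v₀ := b) (v₁ := d) (v₂ := a) (v₃ := v) (v₄ := u)
    hne.symm (by rintro rfl; exact hv ⟨hdb, hbD⟩) (by rintro rfl; exact hbD huD)
    (by rintro rfl; exact hvD hd) hud.symm (by rintro rfl; exact haD huD)
    hdb.symm hda hva.symm huv.symm (fun h => hnab h.symm) (fun h => hvb h.symm) (hnu hdb)
    (fun h => hv ⟨h, hvD⟩) (hD.not_adj_of_mem hd huD) (hnu hda)

end IsEDS

end SimpleGraph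

theorem stmt_3_general {V : Type*} [Fintype V] (G : SimpleGraph V) (hprime : G.IsPrime)
    (hP5 : G.P5Free) (D : Set V) (hD : G.IsEDS D)
    (d : V) (hd : d ∈ D) :
    G.IsClique (G.neighborSet d \ D) := by
  intro x hx y hy hne
  by_contra hxy
  exact hprime.2 _ <| isHomogeneousSet_coComponent hx hy hne hxy ⟨d, fun h => h.2 hd⟩
    fun _ hv _ _ hab => hD.adj_of_complOn_adj hP5 hd hv hab

theorem stmt_3 {V : Type*} [Fintype V] (G : SimpleGraph V) (hprime : G.IsPrime)
    (hP5 : G.P5Free) (D : Set V) (hD : G.IsEDS D) (hcard : 2 ≤ D.ncard)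
    (d : V) (hd : d ∈ D) :
    G.IsClique (G.neighborSet d \ D) :=
  stmt_3_general G hprime hP5 D hD d hd
end

section
/- Let G be a connected P5-free graph with an efficient dominating set D = {d_1, ..., d_k}, k ≥ 2, with R_i = N(d_i) \ D. Then for all i ≠ j, there is at least one edge between R_i and R_j. -/
open SimpleGraph

/-!
Two distinct vertices of an efficient dominating set are at distance at least 3: a walk of
length at most 2 between them would produce a vertex dominated by both. A shortest walk is an
induced path, so in a `P₅`-free graph it has length at most 3. Hence a shortest `d₁`–`d₂` walk is
`d₁ x y d₂`, and `x`, `y` lie outside `D` because a vertex of `D` is dominated only by itself.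
-/

namespace SimpleGraph

variable {V : Type*} {G : SimpleGraph V}

namespace Walk

variable {u v : V} {p : G.Walk u v}

theorem dist_getVert_getVert_of_le (hp : p.length = G.dist u v) {i j : ℕ} (hij : i ≤ j)
    (hj : j ≤ p.length) : G.dist (p.getVert i) (p.getVert j) = j - i := by
  have hsub : ((p.drop i).take (j - i)).IsSubwalk p :=
    ((p.drop i).isSubwalk_take _).trans (p.isSubwalk_drop i)
  have hend : (p.drop i).getVert (j - i) = p.getVert j := by
    rw [drop_getVert, Nat.add_sub_cancel' hij]
  rw [← hend, ← length_eq_dist_of_subwalk hp hsub, take_length, drop_length]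
  omega

theorem dist_getVert_getVert (hp : p.length = G.dist u v) {i j : ℕ} (hi : i ≤ p.length)
    (hj : j ≤ p.length) : G.dist (p.getVert i) (p.getVert j) = Nat.dist i j := by
  rcases le_total i j with hij | hji
  · rw [dist_getVert_getVert_of_le hp hij hj, Nat.dist_eq_sub_of_le hij]
  · rw [dist_comm, dist_getVert_getVert_of_le hp hji hi, Nat.dist_eq_sub_of_le_right hji]

def pathGraphEmbeddingOfLengthEqDist (hp : p.length = G.dist u v) :
    pathGraph (p.length + 1) ↪g G where
  toFun i := p.getVert i
  inj' a b hab := by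
    have := dist_getVert_getVert hp (Fin.is_le a) (Fin.is_le b)
    rw [show p.getVert a = p.getVert b from hab, dist_self] at this
    exact Fin.ext (Nat.eq_of_dist_eq_zero this.symm)
  map_rel_iff' {a b} := by
    have := dist_getVert_getVert hp (Fin.is_le a) (Fin.is_le b)
    change G.Adj (p.getVert a) (p.getVert b) ↔ _
    rw [← dist_eq_one_iff_adj, this, pathGraph_adj, Nat.dist]
    omega

end Walk

def pathGraphEmbeddingOfLE {m n : ℕ} (h : m ≤ n) : pathGraph m ↪g pathGraph n where
  toEmbedding := Fin.castLEEmb h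
  map_rel_iff' := by simp [pathGraph_adj]

theorem P5Free.length_le_three_of_length_eq_dist (hG : G.P5Free) {u v : V} {p : G.Walk u v}
    (hp : p.length = G.dist u v) : p.length ≤ 3 := by
  by_contra! h
  exact hG ⟨(p.pathGraphEmbeddingOfLengthEqDist hp).comp (pathGraphEmbeddingOfLE (by omega))⟩

namespace IsEDS

variable {D : Set V} {d d' : V}

theorem eq_of_dominates_s4 (hD : G.IsEDS D) (hd : d ∈ D) (hd' : d' ∈ D) {v : V}
    (h : d = v ∨ G.Adj d v) (h' : d' = v ∨ G.Adj d' v) : d = d' :=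
  (hD v).unique ⟨hd, h⟩ ⟨hd', h'⟩

theorem notMem_of_adj (hD : G.IsEDS D) (hd : d ∈ D) {x : V} (hx : G.Adj d x) : x ∉ D :=
  fun hxD ↦ hx.ne (hD.eq_of_dominates_s4 hd hxD (.inr hx) (.inl rfl))

theorem three_le_length (hD : G.IsEDS D) (hd : d ∈ D) (hd' : d' ∈ D) (hne : d ≠ d')
    (p : G.Walk d d') : 3 ≤ p.length := by
  match p with
  | .nil => exact absurd rfl hne
  | .cons h .nil => exact absurd (hD.eq_of_dominates_s4 hd hd' (.inr h) (.inl rfl)) hne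
  | .cons h (.cons h' .nil) =>
    exact absurd (hD.eq_of_dominates_s4 hd hd' (.inr h) (.inr h'.symm)) hne
  | .cons _ (.cons _ (.cons _ _)) => simp

end IsEDS

end SimpleGraph

theorem stmt_4_general {V : Type*} (G : SimpleGraph V) (hconn : G.Connected) (hP5 : G.P5Free)
    (D : Set V) (hD : G.IsEDS D)
    (d₁ d₂ : V) (hd₁ : d₁ ∈ D) (hd₂ : d₂ ∈ D) (hne : d₁ ≠ d₂) :
    ∃ x ∈ G.neighborSet d₁ \ D, ∃ y ∈ G.neighborSet d₂ \ D, G.Adj x y := by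
  obtain ⟨p, hp⟩ := hconn.exists_walk_length_eq_dist d₁ d₂
  have hlen : p.length = 3 :=
    (hP5.length_le_three_of_length_eq_dist hp).antisymm (hD.three_le_length hd₁ hd₂ hne p)
  match p, hlen with
  | .cons h₁ (.cons h₂ (.cons h₃ .nil)), _ =>
    exact ⟨_, ⟨h₁, hD.notMem_of_adj hd₁ h₁⟩, _, ⟨h₃.symm, hD.notMem_of_adj hd₂ h₃.symm⟩, h₂⟩

theorem stmt_4 {V : Type*} (G : SimpleGraph V) (hconn : G.Connected) (hP5 : G.P5Free)
    (D : Set V) (hD : G.IsEDS D) (hcard : 2 ≤ D.ncard)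
    (d₁ d₂ : V) (hd₁ : d₁ ∈ D) (hd₂ : d₂ ∈ D) (hne : d₁ ≠ d₂) :
    ∃ x ∈ G.neighborSet d₁ \ D, ∃ y ∈ G.neighborSet d₂ \ D, G.Adj x y :=
  stmt_4_general G hconn hP5 D hD d₁ d₂ hd₁ hd₂ hne
end

section
/- Let G be a P5-free graph with an efficient dominating set D containing three distinct vertices d_i, d_j, d_ℓ, and let x ∈ N(d_i), y ∈ N(d_j), z ∈ N(d_ℓ) with x, y, z ∉ D. If xy is not an edge, then zx is not an edge or zy is not an edge. -/
open SimpleGraph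

theorem stmt_5 {V : Type*} (G : SimpleGraph V) (hP5 : G.P5Free)
    (D : Set V) (hD : G.IsEDS D)
    (di dj dl : V) (hdi : di ∈ D) (hdj : dj ∈ D) (hdl : dl ∈ D)
    (hij : di ≠ dj) (hil : di ≠ dl) (hjl : dj ≠ dl)
    (x y z : V) (hx : x ∈ G.neighborSet di) (hy : y ∈ G.neighborSet dj)
    (hz : z ∈ G.neighborSet dl) (hxD : x ∉ D) (hyD : y ∉ D) (hzD : z ∉ D)
    (hxy : ¬ G.Adj x y) :
    ¬ G.Adj z x ∨ ¬ G.Adj z y := by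
  by_contra h
  push_neg at h
  obtain ⟨hzx, hzy⟩ := h
  rw [SimpleGraph.mem_neighborSet] at hx hy hz
  have hdiz : ¬ G.Adj di z := fun h => hil ((hD z).unique ⟨hdi, Or.inr h⟩ ⟨hdl, Or.inr hz⟩)
  have hdiy : ¬ G.Adj di y := fun h => hij ((hD y).unique ⟨hdi, Or.inr h⟩ ⟨hdj, Or.inr hy⟩)
  have hdidj : ¬ G.Adj di dj := fun h => hij ((hD dj).unique ⟨hdi, Or.inr h⟩ ⟨hdj, Or.inl rfl⟩)
  have hxdj : ¬ G.Adj x dj := fun h =>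
    hij ((hD x).unique ⟨hdi, Or.inr hx⟩ ⟨hdj, Or.inr h.symm⟩)
  have hzdj : ¬ G.Adj z dj := fun h =>
    hjl ((hD z).unique ⟨hdj, Or.inr h.symm⟩ ⟨hdl, Or.inr hz⟩)
  have n1 : di ≠ x := fun h => hxD (h ▸ hdi)
  have n2 : di ≠ z := fun h => hzD (h ▸ hdi)
  have n3 : di ≠ y := fun h => hyD (h ▸ hdi)
  have n4 : x ≠ z := fun h => (h ▸ hzx).ne rfl
  have n5 : x ≠ y := fun h =>
    hij ((hD x).unique ⟨hdi, Or.inr hx⟩ ⟨hdj, Or.inr (h ▸ hy)⟩)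
  have n6 : x ≠ dj := fun h => hxD (h ▸ hdj)
  have n7 : z ≠ y := hzy.ne
  have n8 : z ≠ dj := fun h => hzD (h ▸ hdj)
  have n9 : y ≠ dj := fun h => hyD (h ▸ hdj)
  apply hP5
  refine ⟨⟨⟨![di, x, z, y, dj], ?_⟩, ?_⟩⟩
  · intro a b hab
    fin_cases a <;> fin_cases b <;>
      simp_all [n1, n2, n3, n4, n5, n6, n7, n8, n9, n1.symm, n2.symm, n3.symm, n4.symm,
        n5.symm, n6.symm, n7.symm, n8.symm, n9.symm]
  · intro a b
    have sxy : ¬ G.Adj y x := fun h => hxy h.symm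
    have sdz : ¬ G.Adj z di := fun h => hdiz h.symm
    have sdy : ¬ G.Adj y di := fun h => hdiy h.symm
    have sdd : ¬ G.Adj dj di := fun h => hdidj h.symm
    have sxd : ¬ G.Adj dj x := fun h => hxdj h.symm
    have szd : ¬ G.Adj dj z := fun h => hzdj h.symm
    fin_cases a <;> fin_cases b <;>
      simp [SimpleGraph.pathGraph_adj, show ((3:Fin 5):ℕ) = 3 from rfl,
        show ((4:Fin 5):ℕ) = 4 from rfl] <;>
      first
        | exact hx | exact hx.symm | exact hzx.symm | exact hzx | exact hzy | exact hzy.symm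
        | exact hy.symm | exact hy
        | assumption
end

section
/- Let G be a prime P5-free graph that is not a thin spider. Then any efficient dominating set of G has exactly two vertices. -/
open SimpleGraph

/-!
An efficient dominating set `D` partitions the vertices into the closed neighbourhoods `N[d]`,
`d ∈ D`. If `D = {d}`, then `d` is adjacent to every other vertex, so `V ∖ {d}` is homogeneous
unless `G = K₂`, which is a thin spider. If `|D| ≥ 3`, a sequence of induced-`P₅` arguments,
together with the fact that a prime graph has no proper union of components, shows that any two
vertices lying in the open neighbourhoods of two different vertices of `D` are adjacent. Then
every `N(d)` is homogeneous, hence a single vertex, and `G` is the thin spider with clique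
`V ∖ D` and independent set `D`.
-/

namespace SimpleGraph

variable {V : Type*} {G : SimpleGraph V} {D : Set V}

theorem mem_closedNbhd {v w : V} : w ∈ G.closedNbhd v ↔ w = v ∨ G.Adj v w := Iff.rfl

theorem P5Free.false_of_inducedPath (hG : G.P5Free) {v₀ v₁ v₂ v₃ v₄ : V}
    (h01 : G.Adj v₀ v₁) (h12 : G.Adj v₁ v₂) (h23 : G.Adj v₂ v₃) (h34 : G.Adj v₃ v₄)
    (h02 : ¬ G.Adj v₀ v₂) (h03 : ¬ G.Adj v₀ v₃) (h04 : ¬ G.Adj v₀ v₄)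
    (h13 : ¬ G.Adj v₁ v₃) (h14 : ¬ G.Adj v₁ v₄) (h24 : ¬ G.Adj v₂ v₄) : False := by
  -- the non-edges already force the five vertices to be distinct
  have hinj : Function.Injective ![v₀, v₁, v₂, v₃, v₄] := by
    intro i j hij
    fin_cases i <;> fin_cases j <;> simp_all [G.adj_comm]
  refine hG ⟨⟨⟨_, hinj⟩, fun {i j} => ?_⟩⟩
  fin_cases i <;> fin_cases j <;> simp_all [pathGraph_adj, G.adj_comm]

section Prime

variable [Fintype V]

theorem IsPrime.subsingleton (hG : G.IsPrime) {H : Set V} (hH : H ≠ Set.univ)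
    (hhom : ∀ v ∉ H, (∀ h ∈ H, G.Adj v h) ∨ (∀ h ∈ H, ¬ G.Adj v h)) : H.Subsingleton := by
  by_contra hnt
  exact hG.2 H ⟨Set.one_lt_ncard_iff_nontrivial.2 (Set.not_subsingleton_iff.1 hnt), hH, hhom⟩

theorem IsPrime.eq_univ_of_adj_mem (hG : G.IsPrime) {H : Set V} (hH : ¬ H.Subsingleton)
    (hclosed : ∀ h ∈ H, ∀ v, G.Adj h v → v ∈ H) : H = Set.univ := by
  by_contra hne
  exact hH <| hG.subsingleton hne fun v hv =>
    Or.inr fun h hh hvh => hv (hclosed h hh v hvh.symm)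

theorem IsPrime.exists_adj (hG : G.IsPrime) (hcard : 3 ≤ Nat.card V) (v : V) :
    ∃ w, G.Adj v w := by
  by_contra! hv
  have hnt : ¬ ({v}ᶜ : Set V).Subsingleton := by
    rw [Set.not_subsingleton_iff, ← Set.one_lt_ncard_iff_nontrivial, Set.ncard_compl,
      Set.ncard_singleton]
    omega
  have huniv := hG.eq_univ_of_adj_mem hnt fun h _ u hu (huv : u = v) => hv h (huv ▸ hu).symm
  exact (huniv ▸ Set.mem_univ v : v ∈ ({v}ᶜ : Set V)) rfl

end Prime

theorem IsEDS.exists_mem_adj (hD : G.IsEDS D) {v : V} (hv : v ∉ D) : ∃ d ∈ D, G.Adj d v := by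
  obtain ⟨d, ⟨hd, rfl | h⟩, -⟩ := hD v
  · exact absurd hd hv
  · exact ⟨d, hd, h⟩

theorem IsEDS.eq_of_adj_of_adj_s8 (hD : G.IsEDS D) {d d' v : V} (hd : d ∈ D) (hd' : d' ∈ D)
    (h : G.Adj d v) (h' : G.Adj d' v) : d = d' :=
  (hD v).unique ⟨hd, Or.inr h⟩ ⟨hd', Or.inr h'⟩

theorem IsEDS.not_adj (hD : G.IsEDS D) {d d' : V} (hd : d ∈ D) (hd' : d' ∈ D) : ¬ G.Adj d d' :=
  fun h => G.ne_of_adj h ((hD d').unique ⟨hd, Or.inr h⟩ ⟨hd', Or.inl rfl⟩)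

theorem IsEDS.notMem_of_adj_s8 (hD : G.IsEDS D) {d a : V} (hd : d ∈ D) (ha : G.Adj d a) : a ∉ D :=
  fun haD => hD.not_adj hd haD ha

theorem IsEDS.not_adj_of_adj (hD : G.IsEDS D) {d d' x : V} (hd : d ∈ D) (hd' : d' ∈ D)
    (hne : d ≠ d') (hx : G.Adj d' x) : ¬ G.Adj d x :=
  fun h => hne (hD.eq_of_adj_of_adj_s8 hd hd' h hx)

theorem IsEDS.not_adj_of_adj' (hD : G.IsEDS D) {d d' x : V} (hd : d ∈ D) (hd' : d' ∈ D)
    (hne : d ≠ d') (hx : G.Adj d' x) : ¬ G.Adj x d :=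
  fun h => hD.not_adj_of_adj hd hd' hne hx h.symm

theorem IsEDS.isThinSpider (hD : G.IsEDS D) (hclique : G.IsClique Dᶜ)
    (hnbr : ∀ d ∈ D, ∃! a, G.Adj d a) : G.IsThinSpider := by
  refine ⟨Dᶜ, D, disjoint_compl_left, Set.compl_union_self D, hclique,
    fun a ha b hb _ => hD.not_adj ha hb, fun c hc => ?_, fun i hi => ?_⟩
  · obtain ⟨d, hd, hdc⟩ := hD.exists_mem_adj hc
    exact ⟨d, ⟨hd, hdc.symm⟩, fun d' hd' => hD.eq_of_adj_of_adj_s8 hd'.1 hd hd'.2.symm hdc⟩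
  · obtain ⟨a, hia, ha⟩ := hnbr i hi
    exact ⟨a, ⟨hD.notMem_of_adj_s8 hi hia, hia⟩, fun a' ha' => ha a' ha'.2⟩

def Linked (G : SimpleGraph V) (u w : V) : Prop :=
  u = w ∨ ∃ x y, G.Adj u x ∧ G.Adj w y ∧ G.Adj x y

theorem IsEDS.linked_trans (hP5 : G.P5Free) (hD : G.IsEDS D) {a b c : V} (ha : a ∈ D)
    (hb : b ∈ D) (hc : c ∈ D) (hab : G.Linked a b) (hbc : G.Linked b c) : G.Linked a c := by
  rcases hab with rfl | ⟨x₁, y₁, hx₁, hy₁, hxy₁⟩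
  · exact hbc
  rcases hbc with rfl | ⟨x₂, y₂, hx₂, hy₂, hxy₂⟩
  · exact Or.inr ⟨x₁, y₁, hx₁, hy₁, hxy₁⟩
  by_cases hab : a = b
  · exact Or.inr ⟨x₂, y₂, hab ▸ hx₂, hy₂, hxy₂⟩
  by_cases hbc : b = c
  · exact Or.inr ⟨x₁, y₁, hx₁, hbc ▸ hy₁, hxy₁⟩
  by_cases hac : a = c
  · exact Or.inl hac
  refine Or.inr ?_
  by_contra! hno
  have hx₁y₂ : ¬ G.Adj x₁ y₂ := hno x₁ y₂ hx₁ hy₂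
  have hbridge : ∀ z, G.Adj b z → G.Adj x₁ z → ¬ G.Adj z y₂ := fun z hz hx₁z hzy₂ =>
    hP5.false_of_inducedPath hx₁ hx₁z hzy₂ hy₂.symm
      (hD.not_adj_of_adj ha hb hab hz) (hD.not_adj_of_adj ha hc hac hy₂) (hD.not_adj ha hc)
      hx₁y₂ (hD.not_adj_of_adj' hc ha (Ne.symm hac) hx₁) (hD.not_adj_of_adj' hc hb (Ne.symm hbc) hz)
  by_cases hx₁x₂ : G.Adj x₁ x₂
  · exact hbridge x₂ hx₂ hx₁x₂ hxy₂
  by_cases hy₁x₂ : G.Adj y₁ x₂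
  · exact hP5.false_of_inducedPath hx₁ hxy₁ hy₁x₂ hxy₂
      (hD.not_adj_of_adj ha hb hab hy₁) (hD.not_adj_of_adj ha hb hab hx₂)
      (hD.not_adj_of_adj ha hc hac hy₂) hx₁x₂ hx₁y₂ (hbridge y₁ hy₁ hxy₁)
  · exact hP5.false_of_inducedPath hx₁ hxy₁ hy₁.symm hx₂
      (hD.not_adj_of_adj ha hb hab hy₁) (hD.not_adj ha hb) (hD.not_adj_of_adj ha hb hab hx₂)
      (hD.not_adj_of_adj' hb ha (Ne.symm hab) hx₁) hx₁x₂ hy₁x₂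

section Classes

variable [Fintype V]

theorem IsEDS.exists_adj_notMem_closedNbhd (hG : G.IsPrime) (hP5 : G.P5Free) (hD : G.IsEDS D)
    {d d' a : V} (hd : d ∈ D) (hd' : d' ∈ D) (hne : d ≠ d') (ha : G.Adj d a) :
    ∃ w, G.Adj a w ∧ w ∉ G.closedNbhd d := by
  by_contra! hno
  -- otherwise `d` together with its neighbours that see nothing outside `N[d]` is homogeneous
  set T : Set V := insert d {x | G.Adj d x ∧ G.neighborSet x ⊆ G.closedNbhd d}
  have hT : ¬ T.Subsingleton :=
    Set.not_subsingleton_iff.2 ⟨d, Set.mem_insert _ _, a, Or.inr ⟨ha, hno⟩, G.ne_of_adj ha⟩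
  refine hT (hG.subsingleton (fun hT => ?_) fun v hv => ?_)
  · rcases (hT ▸ Set.mem_univ d' : d' ∈ T) with h | ⟨h, -⟩
    · exact hne h.symm
    · exact hD.not_adj hd hd' h
  by_cases hdv : G.Adj d v
  · obtain ⟨w, hvw, hw⟩ : ∃ w ∈ G.neighborSet v, w ∉ G.closedNbhd d :=
      Set.not_subset.1 fun hsub => hv (Or.inr ⟨hdv, hsub⟩)
    rw [mem_closedNbhd, not_or] at hw
    have hwD : w ∉ D := fun hwD => hw.1 (hD.eq_of_adj_of_adj_s8 hwD hd hvw.symm hdv)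
    obtain ⟨e, he, hew⟩ := hD.exists_mem_adj hwD
    have hed : e ≠ d := fun h => hw.2 (h ▸ hew)
    refine Or.inl fun h hh => ?_
    rcases hh with rfl | ⟨hdh, hh⟩
    · exact hdv.symm
    by_contra hvh
    exact hP5.false_of_inducedPath hew hvw.symm hdv.symm hdh
      (hD.not_adj_of_adj he hd hed hdv) (hD.not_adj he hd) (hD.not_adj_of_adj he hd hed hdh)
      (fun h => hw.2 h.symm) (fun hwh => (mem_closedNbhd.1 (hh hwh.symm)).elim hw.1 hw.2)
      hvh
  · refine Or.inr fun h hh hvh => ?_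
    rcases hh with rfl | ⟨-, hh⟩
    · exact hdv hvh.symm
    · rcases hh hvh.symm with rfl | h
      · exact hv (Set.mem_insert _ _)
      · exact hdv h

theorem IsEDS.linked (hG : G.IsPrime) (hP5 : G.P5Free) (hD : G.IsEDS D)
    (hcard : 3 ≤ Nat.card V) {d d' : V} (hd : d ∈ D) (hd' : d' ∈ D) : G.Linked d d' := by
  -- the closed neighbourhoods of the vertices of `D` linked to `d` form a union of components
  set S : Set V := {v | ∃ e ∈ D, G.Linked d e ∧ v ∈ G.closedNbhd e}
  have hclosed : ∀ s ∈ S, ∀ v, G.Adj s v → v ∈ S := by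
    rintro s ⟨e, he, hde, rfl | hes⟩ v hsv
    · exact ⟨s, he, hde, Or.inr hsv⟩
    by_cases hv : v ∈ D
    · exact ⟨e, he, hde, Or.inl (hD.eq_of_adj_of_adj_s8 he hv hes hsv.symm).symm⟩
    obtain ⟨e', he', he'v⟩ := hD.exists_mem_adj hv
    exact ⟨e', he', hD.linked_trans hP5 hd he he' hde (Or.inr ⟨s, v, hes, he'v, hsv⟩),
      Or.inr he'v⟩
  obtain ⟨a, ha⟩ := hG.exists_adj hcard d
  have hdS : d ∈ S := ⟨d, hd, Or.inl rfl, Or.inl rfl⟩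
  have hS := hG.eq_univ_of_adj_mem
    (Set.not_subsingleton_iff.2 ⟨d, hdS, a, hclosed d hdS a ha, G.ne_of_adj ha⟩) hclosed
  obtain ⟨e, he, hde, rfl | hed'⟩ := (hS ▸ Set.mem_univ d' : d' ∈ S)
  · exact hde
  · exact absurd hed' (hD.not_adj he hd')

theorem IsEDS.exists_adj_mem_neighborSet (hG : G.IsPrime) (hP5 : G.P5Free) (hD : G.IsEDS D)
    (hcard : 3 ≤ Nat.card V) {d d' q : V} (hd : d ∈ D) (hd' : d' ∈ D) (hne : d ≠ d')
    (hq : G.Adj d q) : ∃ c ∈ G.neighborSet d', G.Adj q c := by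
  by_contra! hno
  obtain ⟨w, hqw, hw⟩ := hD.exists_adj_notMem_closedNbhd hG hP5 hd hd' hne hq
  rw [mem_closedNbhd, not_or] at hw
  have hwD : w ∉ D := fun hwD => hw.1 (hD.eq_of_adj_of_adj_s8 hwD hd hqw.symm hq)
  obtain ⟨e, he, hew⟩ := hD.exists_mem_adj hwD
  have hed : e ≠ d := fun h => hw.2 (h ▸ hew)
  have hed' : e ≠ d' := fun h => hno w (h ▸ hew) hqw
  obtain ⟨x, c, hx, hc, hxc⟩ := (hD.linked hG hP5 hcard hd hd').resolve_left hne
  have hqc : ¬ G.Adj q c := hno c hc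
  have hqx : G.Adj q x := by
    by_contra hqx
    exact hP5.false_of_inducedPath hc hxc.symm hx.symm hq
      (hD.not_adj_of_adj hd' hd hne.symm hx) (hD.not_adj hd' hd)
      (hD.not_adj_of_adj hd' hd hne.symm hq) (hD.not_adj_of_adj' hd hd' hne hc)
      (fun h => hqc h.symm) (fun h => hqx h.symm)
  have hcw : G.Adj c w := by
    by_contra hcw
    by_cases hxw : G.Adj x w
    · exact hP5.false_of_inducedPath hc hxc.symm hxw hew.symm
        (hD.not_adj_of_adj hd' hd hne.symm hx) (hD.not_adj_of_adj hd' he hed'.symm hew)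
        (hD.not_adj hd' he) hcw (hD.not_adj_of_adj' he hd' hed' hc)
        (hD.not_adj_of_adj' he hd hed hx)
    · exact hP5.false_of_inducedPath hc hxc.symm hqx.symm hqw
        (hD.not_adj_of_adj hd' hd hne.symm hx) (hD.not_adj_of_adj hd' hd hne.symm hq)
        (hD.not_adj_of_adj hd' he hed'.symm hew) (fun h => hqc h.symm) hcw hxw
  exact hP5.false_of_inducedPath hq hqw hcw.symm hc.symm
    hw.2 (hD.not_adj_of_adj hd hd' hne hc) (hD.not_adj hd hd') hqc
    (hD.not_adj_of_adj' hd' hd hne.symm hq) (hD.not_adj_of_adj' hd' he hed'.symm hew)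

theorem IsEDS.adj_of_adj_of_adj (hG : G.IsPrime) (hP5 : G.P5Free) (hD : G.IsEDS D)
    (hk : 3 ≤ D.ncard) {d₁ d₂ a b : V} (hd₁ : d₁ ∈ D) (hd₂ : d₂ ∈ D) (h₁₂ : d₁ ≠ d₂)
    (ha : G.Adj d₁ a) (hb : G.Adj d₂ b) : G.Adj a b := by
  have hcard : 3 ≤ Nat.card V := hk.trans D.ncard_le_card
  by_contra hab
  obtain ⟨d₃, hd₃, hd₃'⟩ := Set.exists_mem_notMem_of_ncard_lt_ncard
    ((Set.ncard_pair h₁₂).trans_lt hk : ({d₁, d₂} : Set V).ncard < D.ncard)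
  obtain ⟨h₃₁, h₃₂⟩ : d₃ ≠ d₁ ∧ d₃ ≠ d₂ := by simpa [not_or] using hd₃'
  obtain ⟨a', ha', hba'⟩ := hD.exists_adj_mem_neighborSet hG hP5 hcard hd₂ hd₁ h₁₂.symm hb
  have haa' : G.Adj a a' := by
    by_contra haa'
    exact hP5.false_of_inducedPath hb hba' ha'.symm ha
      (hD.not_adj_of_adj hd₂ hd₁ h₁₂.symm ha') (hD.not_adj hd₂ hd₁)
      (hD.not_adj_of_adj hd₂ hd₁ h₁₂.symm ha) (hD.not_adj_of_adj' hd₁ hd₂ h₁₂ hb)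
      (fun h => hab h.symm) (fun h => haa' h.symm)
  obtain ⟨c, hc, hac⟩ := hD.exists_adj_mem_neighborSet hG hP5 hcard hd₁ hd₃ h₃₁.symm ha
  by_cases hbc : G.Adj b c
  · exact hP5.false_of_inducedPath ha hac hbc.symm hb.symm
      (hD.not_adj_of_adj hd₁ hd₃ h₃₁.symm hc) (hD.not_adj_of_adj hd₁ hd₂ h₁₂ hb)
      (hD.not_adj hd₁ hd₂) hab (hD.not_adj_of_adj' hd₂ hd₁ h₁₂.symm ha)
      (hD.not_adj_of_adj' hd₂ hd₃ h₃₂.symm hc)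
  have ha'c : G.Adj a' c := by
    by_contra ha'c
    exact hP5.false_of_inducedPath hba' haa'.symm hac hc.symm
      (fun h => hab h.symm) hbc (hD.not_adj_of_adj' hd₃ hd₂ h₃₂ hb) ha'c
      (hD.not_adj_of_adj' hd₃ hd₁ h₃₁ ha') (hD.not_adj_of_adj' hd₃ hd₁ h₃₁ ha)
  exact hP5.false_of_inducedPath hc ha'c.symm hba'.symm hb.symm
    (hD.not_adj_of_adj hd₃ hd₁ h₃₁ ha') (hD.not_adj_of_adj hd₃ hd₂ h₃₂ hb) (hD.not_adj hd₃ hd₂)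
    (fun h => hbc h.symm) (hD.not_adj_of_adj' hd₂ hd₃ h₃₂.symm hc)
    (hD.not_adj_of_adj' hd₂ hd₁ h₁₂.symm ha')

theorem IsEDS.neighborSet_subsingleton (hG : G.IsPrime) (hP5 : G.P5Free) (hD : G.IsEDS D)
    (hk : 3 ≤ D.ncard) {d : V} (hd : d ∈ D) : (G.neighborSet d).Subsingleton := by
  refine hG.subsingleton (fun h => G.irrefl (h ▸ Set.mem_univ d : d ∈ G.neighborSet d))
    fun v hv => ?_
  rcases eq_or_ne v d with rfl | hvd
  · exact Or.inl fun a ha => ha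
  by_cases hvD : v ∈ D
  · exact Or.inr fun a ha => hD.not_adj_of_adj hvD hd hvd ha
  obtain ⟨e, he, hev⟩ := hD.exists_mem_adj hvD
  exact Or.inl fun a ha =>
    hD.adj_of_adj_of_adj hG hP5 hk he hd (fun h => hv (h ▸ hev)) hev ha

theorem IsEDS.isThinSpider_of_three_le_ncard (hG : G.IsPrime) (hP5 : G.P5Free)
    (hD : G.IsEDS D) (hk : 3 ≤ D.ncard) : G.IsThinSpider := by
  have hcard : 3 ≤ Nat.card V := hk.trans D.ncard_le_card
  refine hD.isThinSpider (fun u hu v hv huv => ?_) fun d hd => ?_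
  · obtain ⟨du, hdu, hduu⟩ := hD.exists_mem_adj hu
    obtain ⟨dv, hdv, hdvv⟩ := hD.exists_mem_adj hv
    refine hD.adj_of_adj_of_adj hG hP5 hk hdu hdv (fun h => huv ?_) hduu hdvv
    exact hD.neighborSet_subsingleton hG hP5 hk hdu hduu (h ▸ hdvv)
  · obtain ⟨a, ha⟩ := hG.exists_adj hcard d
    exact ⟨a, ha, fun a' ha' => hD.neighborSet_subsingleton hG hP5 hk hd ha' ha⟩

theorem IsEDS.isThinSpider_of_ncard_eq_one (hG : G.IsPrime) (hD : G.IsEDS D)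
    (h : D.ncard = 1) : G.IsThinSpider := by
  obtain ⟨d, rfl⟩ := Set.ncard_eq_one.1 h
  have hadj : ∀ v ≠ d, G.Adj d v := fun v hv => by
    obtain ⟨e, he, hev⟩ := hD.exists_mem_adj (Set.notMem_singleton_iff.2 hv)
    exact Set.mem_singleton_iff.1 he ▸ hev
  have hsub : ({d}ᶜ : Set V).Subsingleton :=
    hG.subsingleton (fun h => (h ▸ Set.mem_univ d : d ∈ ({d}ᶜ : Set V)) rfl) fun v hv =>
      Or.inl fun w hw => Set.notMem_compl_iff.1 hv ▸ hadj w hw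
  refine hD.isThinSpider (IsClique.of_subsingleton hsub) fun d' hd' => ?_
  have : Nontrivial V := Fintype.one_lt_card_iff_nontrivial.1 hG.1
  obtain ⟨v, hv⟩ := exists_ne d
  rw [Set.mem_singleton_iff.1 hd']
  exact ⟨v, hadj v hv, fun w hw => hsub (G.ne_of_adj hw).symm hv⟩

end Classes

end SimpleGraph

theorem stmt_8 {V : Type*} [Fintype V] (G : SimpleGraph V) (hprime : G.IsPrime)
    (hP5 : G.P5Free) (hns : ¬ G.IsThinSpider) (D : Set V) (hD : G.IsEDS D) :
    D.ncard = 2 := by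
  have : Nonempty V := Fintype.card_pos_iff.1 (by have := hprime.1; omega)
  obtain ⟨d, ⟨hd, -⟩, -⟩ := hD (Classical.arbitrary V)
  have h0 : D.ncard ≠ 0 := Set.ncard_ne_zero_of_mem hd
  have h1 : D.ncard ≠ 1 := fun h => hns (hD.isThinSpider_of_ncard_eq_one hprime h)
  have h3 : ¬ 3 ≤ D.ncard := fun h => hns (hD.isThinSpider_of_three_le_ncard hprime hP5 h)
  omega
end

section
/- In a thin spider with |C| = |I| ≥ 3, the set I of degree-1 vertices is the unique efficient dominating set. -/
open SimpleGraph

theorem stmt_12 {V : Type*} [Fintype V] (G : SimpleGraph V)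
    (C I : Set V) (hdisj : Disjoint C I) (hunion : C ∪ I = Set.univ)
    (hclique : G.IsClique C) (hindep : ∀ a ∈ I, ∀ b ∈ I, a ≠ b → ¬ G.Adj a b)
    (hmC : ∀ c ∈ C, ∃! i, i ∈ I ∧ G.Adj c i)
    (hmI : ∀ i ∈ I, ∃! c, c ∈ C ∧ G.Adj i c)
    (hcards : C.ncard = I.ncard) (hI3 : 3 ≤ I.ncard) :
    G.IsEDS I ∧ ∀ D : Set V, G.IsEDS D → D = I := by
  have hmem : ∀ v : V, v ∈ C ∨ v ∈ I := fun v => by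
    have : v ∈ C ∪ I := hunion ▸ Set.mem_univ v
    exact this
  constructor
  · intro v
    rcases hmem v with hv | hv
    · obtain ⟨i, ⟨hiI, hadj⟩, huniq⟩ := hmC v hv
      refine ⟨i, ⟨hiI, Or.inr hadj.symm⟩, ?_⟩
      rintro d ⟨hdI, rfl | hadj'⟩
      · exact absurd hdI (Set.disjoint_left.mp hdisj hv)
      · exact huniq d ⟨hdI, hadj'.symm⟩
    · refine ⟨v, ⟨hv, Or.inl rfl⟩, ?_⟩
      rintro d ⟨hdI, rfl | hadj⟩
      · rfl
      · exact absurd hadj (hindep d hdI v hv (G.ne_of_adj hadj))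
  · intro D hD
    have hDC : ∀ c ∈ C, c ∉ D := by
      intro c hc hcD
      obtain ⟨i, ⟨hiI, hci⟩, hiu⟩ := hmC c hc
      obtain ⟨i', hi'I, hne⟩ : ∃ i' ∈ I, i' ≠ i :=
        Set.exists_ne_of_one_lt_ncard (lt_of_lt_of_le (by norm_num) hI3) i
      obtain ⟨c', ⟨hc'C, hi'c'⟩, hcu⟩ := hmI i' hi'I
      have hcc' : c ≠ c' := by
        rintro rfl
        exact hne (hiu i' ⟨hi'I, hi'c'.symm⟩)
      obtain ⟨d, hd, hduniq⟩ := hD c'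
      have h1 : c = d := hduniq c ⟨hcD, Or.inr (hclique hc hc'C hcc')⟩
      obtain ⟨e, ⟨heD, he⟩, _⟩ := hD i'
      rcases he with rfl | hadj
      · have h2 : e = d := hduniq e ⟨heD, Or.inr hi'c'⟩
        exact Set.disjoint_left.mp hdisj hc (h1.trans h2.symm ▸ hi'I)
      · have heC : e ∈ C := by
          rcases hmem e with h | h
          · exact h
          · exact absurd hadj (hindep e h i' hi'I (G.ne_of_adj hadj))
        have hec' : e = c' := hcu e ⟨heC, hadj.symm⟩
        have h2 : c' = d := hduniq c' ⟨hec' ▸ heD, Or.inl rfl⟩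
        exact hcc' (h1.trans h2.symm)
    refine Set.Subset.antisymm ?_ ?_
    · intro d hd
      rcases hmem d with h | h
      · exact absurd hd (hDC d h)
      · exact h
    · intro i hiI
      obtain ⟨d, ⟨hdD, hd⟩, _⟩ := hD i
      rcases hd with rfl | hadj
      · exact hdD
      · rcases hmem d with h | h
        · exact absurd hdD (hDC d h)
        · exact absurd hadj (hindep d h i hiI (G.ne_of_adj hadj))
end

section
/- Let G be a graph with an efficient dominating set D = {d_1, d_2} such that R_1 = N(d_1) and R_2 = N(d_2) are cliques and every vertex of R_1 has a neighbor in R_2 and vice versa. If |R_1| < |R_2|, then d_1 is the unique vertex of minimum degree δ(G) in G. -/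
open SimpleGraph

private lemma deg_lt_aux {V : Type*} [Fintype V] (G : SimpleGraph V) [DecidableRel G.Adj]
    (d v y : V) (hcl : G.IsClique (G.neighborSet d)) (hadj : G.Adj d v)
    (hyd : y ≠ d) (hyn : ¬ G.Adj d y) (hvy : G.Adj v y) :
    G.degree d < G.degree v := by
  classical
  have hsub : insert d (insert y ((G.neighborFinset d).erase v)) ⊆ G.neighborFinset v := by
    intro w hw
    simp only [Finset.mem_insert, Finset.mem_erase, SimpleGraph.mem_neighborFinset] at hw ⊢
    rcases hw with rfl | rfl | ⟨hwv, hw⟩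
    · exact hadj.symm
    · exact hvy
    · exact hcl (by simpa using hadj) (by simpa using hw) (Ne.symm hwv)
  have hy : y ∉ (G.neighborFinset d).erase v := by
    simp [hyn]
  have hd : d ∉ insert y ((G.neighborFinset d).erase v) := by
    simp [Ne.symm hyd]
  have hvd : v ∈ G.neighborFinset d := by simpa using hadj
  have hdeg : G.degree d = (G.neighborFinset d).card := rfl
  have hdeg' : G.degree v = (G.neighborFinset v).card := rfl
  have hpos : 1 ≤ (G.neighborFinset d).card := Finset.card_pos.2 ⟨v, hvd⟩
  have hcard : (insert d (insert y ((G.neighborFinset d).erase v))).card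
      = G.degree d + 1 := by
    rw [Finset.card_insert_of_notMem hd, Finset.card_insert_of_notMem hy,
      Finset.card_erase_of_mem hvd, hdeg]
    omega
  have hle := Finset.card_le_card hsub
  rw [hcard, ← hdeg'] at hle
  omega

theorem stmt_16 {V : Type*} [Fintype V] [Nonempty V] (G : SimpleGraph V) [DecidableRel G.Adj]
    (d₁ d₂ : V) (hne : d₁ ≠ d₂) (hD : G.IsEDS {d₁, d₂})
    (hcl₁ : G.IsClique (G.neighborSet d₁)) (hcl₂ : G.IsClique (G.neighborSet d₂))
    (hcr₁ : ∀ x ∈ G.neighborSet d₁, ∃ y ∈ G.neighborSet d₂, G.Adj x y)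
    (hcr₂ : ∀ y ∈ G.neighborSet d₂, ∃ x ∈ G.neighborSet d₁, G.Adj y x)
    (hlt : (G.neighborSet d₁).ncard < (G.neighborSet d₂).ncard) :
    G.degree d₁ = G.minDegree ∧ ∀ v : V, G.degree v = G.minDegree → v = d₁ := by
  classical
  have hnadj : ¬ G.Adj d₁ d₂ := by
    intro h
    obtain ⟨d, hd, huniq⟩ := hD d₂
    exact hne ((huniq d₁ ⟨Or.inl rfl, Or.inr h⟩).trans
      (huniq d₂ ⟨Or.inr rfl, Or.inl rfl⟩).symm)
  have hdisj : ∀ x, G.Adj d₁ x → G.Adj d₂ x → False := by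
    intro x h1 h2
    obtain ⟨d, hd, huniq⟩ := hD x
    exact hne ((huniq d₁ ⟨Or.inl rfl, Or.inr h1⟩).trans
      (huniq d₂ ⟨Or.inr rfl, Or.inr h2⟩).symm)
  have hlt' : G.degree d₁ < G.degree d₂ := by
    simpa [Set.ncard_eq_toFinset_card', SimpleGraph.degree,
      SimpleGraph.neighborFinset_def] using hlt
  have key : ∀ v, v ≠ d₁ → G.degree d₁ < G.degree v := by
    intro v hv
    obtain ⟨d, ⟨hdmem, hdom⟩, huniq⟩ := hD v
    simp only [Set.mem_insert_iff, Set.mem_singleton_iff] at hdmem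
    rcases hdmem with h | h
    · rw [h] at hdom
      rcases hdom with rfl | hadj
      · exact absurd rfl hv
      · obtain ⟨y, hy2, hvy⟩ := hcr₁ v (by simpa using hadj)
        have hy2' : G.Adj d₂ y := hy2
        have hyd : y ≠ d₁ := by rintro rfl; exact hnadj hy2'.symm
        exact deg_lt_aux G d₁ v y hcl₁ hadj hyd (fun h => hdisj y h hy2') hvy
    · rw [h] at hdom
      rcases hdom with rfl | hadj
      · exact hlt'
      · obtain ⟨y, hy1, hvy⟩ := hcr₂ v (by simpa using hadj)
        have hy1' : G.Adj d₁ y := hy1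
        have hyd : y ≠ d₂ := by rintro rfl; exact hnadj hy1'
        have := deg_lt_aux G d₂ v y hcl₂ hadj hyd (fun h => hdisj y hy1' h) hvy
        omega
  have hmin : G.minDegree = G.degree d₁ := by
    obtain ⟨v, hv⟩ := G.exists_minimal_degree_vertex
    by_cases h : v = d₁
    · rw [hv, h]
    · have h1 := key v h
      have h2 := G.minDegree_le_degree d₁
      omega
  refine ⟨hmin.symm, ?_⟩
  intro v hv
  by_contra h
  have := key v h
  omega
end

section
/- Let G be a prime P5-free graph that is not a thin spider. Then G has at most one efficient dominating set. -/
open SimpleGraph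

lemma eds_unique {V : Type*} {G : SimpleGraph V} {D : Set V} (h : G.IsEDS D)
    {a b v : V} (ha : a ∈ D) (hb : b ∈ D) (hav : a = v ∨ G.Adj a v)
    (hbv : b = v ∨ G.Adj b v) : a = b := by
  obtain ⟨c, -, hu⟩ := h v
  rw [hu a ⟨ha, hav⟩, hu b ⟨hb, hbv⟩]

lemma eds_indep {V : Type*} {G : SimpleGraph V} {D : Set V} (h : G.IsEDS D)
    {a b : V} (ha : a ∈ D) (hb : b ∈ D) (hab : G.Adj a b) : False := by
  have := eds_unique h ha hb (Or.inr hab) (Or.inl rfl)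
  exact G.irrefl (this ▸ hab)

lemma pathGraph5_embed {V : Type*} (G : SimpleGraph V) (f : Fin 5 → V)
    (hinj : Function.Injective f)
    (h01 : G.Adj (f 0) (f 1)) (h12 : G.Adj (f 1) (f 2)) (h23 : G.Adj (f 2) (f 3))
    (h34 : G.Adj (f 3) (f 4))
    (h02 : ¬ G.Adj (f 0) (f 2)) (h03 : ¬ G.Adj (f 0) (f 3)) (h04 : ¬ G.Adj (f 0) (f 4))
    (h13 : ¬ G.Adj (f 1) (f 3)) (h14 : ¬ G.Adj (f 1) (f 4)) (h24 : ¬ G.Adj (f 2) (f 4)) :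
    Nonempty (SimpleGraph.pathGraph 5 ↪g G) := by
  refine ⟨⟨⟨f, hinj⟩, ?_⟩⟩
  intro a b
  fin_cases a <;> fin_cases b <;>
    first
    | exact iff_of_false (fun h => G.irrefl h) (by rw [SimpleGraph.pathGraph_adj]; decide)
    | exact iff_of_true h01 (by rw [SimpleGraph.pathGraph_adj]; decide)
    | exact iff_of_true h01.symm (by rw [SimpleGraph.pathGraph_adj]; decide)
    | exact iff_of_true h12 (by rw [SimpleGraph.pathGraph_adj]; decide)
    | exact iff_of_true h12.symm (by rw [SimpleGraph.pathGraph_adj]; decide)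
    | exact iff_of_true h23 (by rw [SimpleGraph.pathGraph_adj]; decide)
    | exact iff_of_true h23.symm (by rw [SimpleGraph.pathGraph_adj]; decide)
    | exact iff_of_true h34 (by rw [SimpleGraph.pathGraph_adj]; decide)
    | exact iff_of_true h34.symm (by rw [SimpleGraph.pathGraph_adj]; decide)
    | exact iff_of_false h02 (by rw [SimpleGraph.pathGraph_adj]; decide)
    | exact iff_of_false (fun h => h02 h.symm) (by rw [SimpleGraph.pathGraph_adj]; decide)
    | exact iff_of_false h03 (by rw [SimpleGraph.pathGraph_adj]; decide)
    | exact iff_of_false (fun h => h03 h.symm) (by rw [SimpleGraph.pathGraph_adj]; decide)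
    | exact iff_of_false h04 (by rw [SimpleGraph.pathGraph_adj]; decide)
    | exact iff_of_false (fun h => h04 h.symm) (by rw [SimpleGraph.pathGraph_adj]; decide)
    | exact iff_of_false h13 (by rw [SimpleGraph.pathGraph_adj]; decide)
    | exact iff_of_false (fun h => h13 h.symm) (by rw [SimpleGraph.pathGraph_adj]; decide)
    | exact iff_of_false h14 (by rw [SimpleGraph.pathGraph_adj]; decide)
    | exact iff_of_false (fun h => h14 h.symm) (by rw [SimpleGraph.pathGraph_adj]; decide)
    | exact iff_of_false h24 (by rw [SimpleGraph.pathGraph_adj]; decide)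
    | exact iff_of_false (fun h => h24 h.symm) (by rw [SimpleGraph.pathGraph_adj]; decide)

/-- Key lemma: if `d ∈ D₁ \ D₂`, `d' ∈ D₂` with `d ~ d'`, then any neighbor of `d`
other than `d'` is also a neighbor of `d'` (otherwise we find an induced P₅). -/
lemma keyA {V : Type*} {G : SimpleGraph V} (hP5 : G.P5Free) {D₁ D₂ : Set V}
    (h1 : G.IsEDS D₁) (h2 : G.IsEDS D₂) {d d' : V}
    (hd1 : d ∈ D₁) (hd2 : d ∉ D₂) (hd'2 : d' ∈ D₂) (hadj : G.Adj d d') :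
    ∀ v, v ≠ d' → G.Adj v d → G.Adj v d' := by
  intro v hvd' hvadj
  by_contra hnadj
  have hvd : v ≠ d := hvadj.ne
  -- d' ∉ D₁
  have hd'1 : d' ∉ D₁ := fun h => eds_indep h1 hd1 h hadj
  -- v ∉ D₂ : otherwise v and d' both D₂-dominate d
  have hv2 : v ∉ D₂ := fun h => hvd' (eds_unique h2 h hd'2 (Or.inr hvadj) (Or.inr hadj.symm))
  -- v ∉ D₁ : otherwise v and d both D₁-dominate d
  have hv1 : v ∉ D₁ := fun h => eds_indep h1 h hd1 hvadj
  -- b : D₂-dominator of v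
  obtain ⟨b, ⟨hb2, hbv⟩, -⟩ := h2 v
  have hbv : G.Adj b v := by
    rcases hbv with h | h
    · exact absurd (h ▸ hb2) hv2
    · exact h
  have hbd' : b ≠ d' := fun h => hnadj ((h ▸ hbv).symm)
  have hbd : b ≠ d := fun h => hd2 (h ▸ hb2)
  -- b ∉ D₁ : otherwise b and d both D₁-dominate v
  have hb1 : b ∉ D₁ := fun h => hbd (eds_unique h1 h hd1 (Or.inr hbv) (Or.inr hvadj.symm))
  -- e : D₁-dominator of b
  obtain ⟨e, ⟨he1, heb⟩, -⟩ := h1 b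
  have heb : G.Adj e b := by
    rcases heb with h | h
    · exact absurd (h ▸ he1) hb1
    · exact h
  -- e ∉ D₂ : otherwise e and b both in D₂ adjacent
  have he2 : e ∉ D₂ := fun h => eds_indep h2 h hb2 heb
  have hed : e ≠ d := fun h =>
    hbd' (eds_unique h2 hb2 hd'2 (Or.inr (h ▸ heb).symm) (Or.inr hadj.symm))
  -- remaining non-edges
  have n_d'v : ¬ G.Adj d' v := fun h => hnadj h.symm
  have n_d'b : ¬ G.Adj d' b := fun h => eds_indep h2 hd'2 hb2 h
  have n_d'e : ¬ G.Adj d' e := fun h =>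
    hed (eds_unique h1 he1 hd1 (Or.inr h.symm) (Or.inr hadj))
  have n_db : ¬ G.Adj d b := fun h =>
    hbd' (eds_unique h2 hb2 hd'2 (Or.inr h.symm) (Or.inr hadj.symm))
  have n_de : ¬ G.Adj d e := fun h => eds_indep h1 hd1 he1 h
  have n_ve : ¬ G.Adj v e := fun h =>
    hed (eds_unique h1 he1 hd1 (Or.inr h.symm) (Or.inr hvadj.symm))
  -- distinctness
  have ne1 : d' ≠ d := hadj.ne'
  have ne2 : d' ≠ v := hvd'.symm
  have ne3 : d' ≠ b := hbd'.symm
  have ne4 : d' ≠ e := fun h => he2 (h ▸ hd'2)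
  have ne5 : d ≠ v := hvd.symm
  have ne6 : d ≠ b := hbd.symm
  have ne7 : d ≠ e := hed.symm
  have ne8 : v ≠ b := (hbv.ne).symm
  have ne9 : v ≠ e := fun h => hv1 (h.symm ▸ he1)
  have ne10 : b ≠ e := heb.ne'
  have hinj : Function.Injective (![d', d, v, b, e] : Fin 5 → V) := by
    intro i j hij
    fin_cases i <;> fin_cases j <;> simp_all
  exact hP5 (pathGraph5_embed G ![d', d, v, b, e] hinj
    hadj.symm hvadj.symm hbv.symm heb.symm n_d'v n_d'b n_d'e n_db n_de n_ve)

lemma main_aux {V : Type*} [Fintype V] {G : SimpleGraph V} (hprime : G.IsPrime)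
    (hP5 : G.P5Free) (hns : ¬ G.IsThinSpider) {D₁ D₂ : Set V}
    (h1 : G.IsEDS D₁) (h2 : G.IsEDS D₂) {d : V} (hd1 : d ∈ D₁) (hd2 : d ∉ D₂) :
    False := by
  -- d' : the D₂-dominator of d
  obtain ⟨d', ⟨hd'2, hd'd⟩, -⟩ := h2 d
  have hd'd : G.Adj d' d := by
    rcases hd'd with h | h
    · exact absurd (h ▸ hd'2) hd2
    · exact h
  have hadj : G.Adj d d' := hd'd.symm
  have hd'1 : d' ∉ D₁ := fun h => eds_indep h1 hd1 h hadj
  have fa : ∀ v, v ≠ d' → G.Adj v d → G.Adj v d' :=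
    keyA hP5 h1 h2 hd1 hd2 hd'2 hadj
  have fb : ∀ v, v ≠ d → G.Adj v d' → G.Adj v d :=
    keyA hP5 h2 h1 hd'2 hd'1 hd1 hadj.symm
  have hne : d ≠ d' := hadj.ne
  by_cases huniv : ({d, d'} : Set V) = Set.univ
  · -- V = {d, d'} : G is K₂, a thin spider
    refine hns ⟨{d}, {d'}, ?_, ?_, ?_, ?_, ?_, ?_⟩
    · simpa using hne
    · rw [Set.singleton_union]; exact huniv
    · intro a ha b hb hab
      rw [Set.mem_singleton_iff] at ha hb
      exact absurd (ha.trans hb.symm) hab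
    · intro a ha b hb hab
      rw [Set.mem_singleton_iff] at ha hb
      exact absurd (ha.trans hb.symm) (fun h => hab h)
    · intro c hc
      rw [Set.mem_singleton_iff] at hc
      subst hc
      refine ⟨d', ⟨rfl, hadj⟩, ?_⟩
      intro i hi
      exact hi.1
    · intro i hi
      rw [Set.mem_singleton_iff] at hi
      subst hi
      refine ⟨d, ⟨rfl, hadj.symm⟩, ?_⟩
      intro c hc
      exact hc.1
  · -- {d, d'} is a homogeneous set
    refine hprime.2 {d, d'} ⟨?_, huniv, ?_⟩
    · rw [Set.ncard_pair hne]
    · intro v hv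
      have hvd : v ≠ d := fun h => hv (h ▸ Set.mem_insert d {d'})
      have hvd' : v ≠ d' := fun h => hv (h ▸ Set.mem_insert_of_mem d rfl)
      by_cases hvadj : G.Adj v d
      · left
        intro h hh
        simp only [Set.mem_insert_iff, Set.mem_singleton_iff] at hh
        rcases hh with rfl | rfl
        · exact hvadj
        · exact fa v hvd' hvadj
      · right
        intro h hh
        simp only [Set.mem_insert_iff, Set.mem_singleton_iff] at hh
        rcases hh with rfl | rfl
        · exact hvadj
        · exact fun hc => hvadj (fb v hvd hc)

theorem stmt_17 {V : Type*} [Fintype V] (G : SimpleGraph V) (hprime : G.IsPrime)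
    (hP5 : G.P5Free) (hns : ¬ G.IsThinSpider) :
    ∀ D₁ D₂ : Set V, G.IsEDS D₁ → G.IsEDS D₂ → D₁ = D₂ := by
  intro D₁ D₂ h1 h2
  ext x
  constructor
  · intro hx
    by_contra hx2
    exact main_aux hprime hP5 hns h1 h2 hx hx2
  · intro hx
    by_contra hx1
    exact main_aux hprime hP5 hns h2 h1 hx hx1
end
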